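/- There is a universal constant C > 0 with the following property. Let X be a compact metric space and let 𝓕 be a Banach space that is a linear subspace of C(X) and is compactly embedded in C(X), meaning its unit ball U_𝓕 = {F ∈ 𝓕 : ‖F‖_𝓕 ≤ 1} is a compact subset of C(X) in the sup-norm metric. There exists a prediction strategy producing predictions μₙ with |μₙ| ≤ 1 that guarantees, for every sequence of signals x₁, x₂, … ∈ X and observations y₁, y₂, … ∈ [−1, 1], for all N = 1, 2, … and all F ∈ 𝓕: Σ_{n=1}^N (yₙ − μₙ)² ≤ Σ_{n=1}^N (yₙ − F(xₙ))² + C · inf_{ε∈(0,1/2]} ( H_{ε/φ}(U_𝓕) + log₂ log₂ (1/ε) + log₂ log₂ φ + εN + 1 ), where φ := 2 max(1, ‖F‖_𝓕) and H_δ(U_𝓕) is the metric entropy of U_𝓕 in the sup-norm metric. -/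

import Mathlib

open scoped BigOperators

universe u v

/-- Given a prediction strategy `σ` and sequences of signals `x` and observations `y`,
`preds σ x y n` is the prediction output on round `n`. -/
noncomputable def preds {X P : Type*} (σ : List (X × P) → X → P)
    (x : ℕ → X) (y : ℕ → P) (n : ℕ) : P :=
  σ ((List.range n).map fun i => (x i, y i)) (x n)

/-- The minimal number of points of `A` forming an `ε`-net for `A`. -/
noncomputable def coveringNumber {E : Type*} [MetricSpace E] (A : Set E) (ε : ℝ) : ℕ :=
  sInf {n : ℕ | ∃ S : Finset E, ↑S ⊆ A ∧ S.card = n ∧ ∀ a ∈ A, ∃ b ∈ S, dist a b ≤ ε}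

/-- Metric entropy: binary logarithm of the minimal size of an `ε`-net. -/
noncomputable def metricEntropy {E : Type*} [MetricSpace E] (A : Set E) (ε : ℝ) : ℝ :=
  Real.logb 2 (coveringNumber A ε)

lemma log_le_logb_two {x : ℝ} (hx : 1 ≤ x) : Real.log x ≤ Real.logb 2 x := by
  rw [Real.logb, le_div_iff₀ (Real.log_pos one_lt_two)]
  have h1 : Real.log 2 ≤ 1 := by linarith [Real.log_two_lt_d9]
  have h2 : 0 ≤ Real.log x := Real.log_nonneg hx
  nlinarith


open scoped BigOperators

noncomputable def pw (n : ℕ) : ℝ := 1 / (((n : ℝ) + 1) * ((n : ℝ) + 2))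

lemma pw_pos (n : ℕ) : 0 < pw n := by unfold pw; positivity

lemma pw_eq (n : ℕ) : pw n = 1 / ((n : ℝ) + 1) - 1 / ((n : ℝ) + 2) := by
  unfold pw
  have h1 : ((n : ℝ) + 1) ≠ 0 := by positivity
  have h2 : ((n : ℝ) + 2) ≠ 0 := by positivity
  field_simp
  ring

lemma summable_pw : Summable pw := by
  have h0 : Summable (fun n : ℕ => 1 / (n : ℝ) ^ 2) :=
    Real.summable_one_div_nat_pow.2 (by norm_num)
  have h1 : Summable (fun n : ℕ => 1 / ((n : ℝ) + 1) ^ 2) := by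
    have := (summable_nat_add_iff (f := fun n : ℕ => 1 / (n : ℝ) ^ 2) 1).2 h0
    refine this.congr fun n => ?_
    push_cast
    ring_nf
  refine h1.of_nonneg_of_le (fun n => (pw_pos n).le) fun n => ?_
  unfold pw
  have h2 : (0:ℝ) < ((n : ℝ) + 1) ^ 2 := by positivity
  apply one_div_le_one_div_of_le h2
  nlinarith [Nat.cast_nonneg (α := ℝ) n]

lemma sum_pw_range (N : ℕ) : ∑ n ∈ Finset.range N, pw n = 1 - 1 / ((N : ℝ) + 1) := by
  induction N with
  | zero => simp
  | succ n ih =>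
    rw [Finset.sum_range_succ, ih, pw_eq]
    push_cast
    ring

lemma sum_pw_le (s : Finset ℕ) : ∑ n ∈ s, pw n ≤ 1 := by
  obtain ⟨N, hN⟩ : ∃ N, s ⊆ Finset.range N :=
    ⟨s.sup id + 1, fun a ha => Finset.mem_range.2 (Nat.lt_succ_of_le (Finset.le_sup (f := id) ha))⟩
  calc ∑ n ∈ s, pw n ≤ ∑ n ∈ Finset.range N, pw n :=
        Finset.sum_le_sum_of_subset_of_nonneg hN fun i _ _ => (pw_pos i).le
    _ = 1 - 1 / ((N : ℝ) + 1) := sum_pw_range N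
    _ ≤ 1 := by
        have : (0:ℝ) < 1 / ((N : ℝ) + 1) := by positivity
        linarith

lemma log_one_div_pw_le (n : ℕ) : Real.log (1 / pw n) ≤ 2 * Real.log ((n : ℝ) + 2) := by
  unfold pw
  rw [one_div_one_div, Real.log_mul (by positivity) (by positivity)]
  have h := Real.log_le_log (by positivity : (0:ℝ) < (n : ℝ) + 1) (by linarith : (n : ℝ) + 1 ≤ (n : ℝ) + 2)
  linarith

/-- clipping to [-1,1] -/
noncomputable def clp (t : ℝ) : ℝ := max (-1) (min 1 t)

lemma clp_mem (t : ℝ) : clp t ∈ Set.Icc (-1 : ℝ) 1 :=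
  ⟨le_max_left _ _, max_le (by norm_num) (min_le_left _ _)⟩

lemma abs_clp_le_one (t : ℝ) : |clp t| ≤ 1 :=
  abs_le.2 ⟨(clp_mem t).1, (clp_mem t).2⟩

lemma abs_clp_sub_clp_le (a b : ℝ) : |clp a - clp b| ≤ |a - b| := by
  unfold clp
  calc |max (-1) (min 1 a) - max (-1) (min 1 b)| ≤ |min 1 a - min 1 b| := by
        rw [max_comm (-1) (min 1 a), max_comm (-1) (min 1 b)]
        exact abs_max_sub_max_le_abs _ _ _
    _ ≤ |a - b| := by
        refine (abs_min_sub_min_le_max 1 a 1 b).trans ?_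
        simp

lemma sq_sub_clp_le {Y t : ℝ} (hY : |Y| ≤ 1) : (Y - clp t) ^ 2 ≤ (Y - t) ^ 2 := by
  obtain ⟨hY1, hY2⟩ := abs_le.1 hY
  unfold clp
  rcases le_total t (-1) with h | h
  · rw [min_eq_right (by linarith), max_eq_left (by linarith)]
    nlinarith
  · rcases le_total 1 t with h' | h'
    · rw [min_eq_left h', max_eq_right (by norm_num)]
      nlinarith
    · rw [min_eq_right h', max_eq_right h]


lemma exp_quad_bound {xx : ℝ} (h : |xx| ≤ 1) : Real.exp xx ≤ 1 + xx + (3/4) * xx ^ 2 := by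
  have hb := Real.exp_bound h (n := 2) (by norm_num)
  have hsum : ∑ m ∈ Finset.range 2, xx ^ m / (m.factorial : ℝ) = 1 + xx := by
    simp [Finset.sum_range_succ]
  rw [hsum] at hb
  have h2 : |xx| ^ 2 = xx ^ 2 := sq_abs xx
  have hb' := abs_le.1 hb
  have := hb'.2
  rw [h2] at this
  norm_num at this
  nlinarith [this]

lemma tangent_core {u v : ℝ} (hu : |u| ≤ 2) (hv : |v| ≤ 2) :
    Real.exp (-(1/16) * u ^ 2) ≤
      Real.exp (-(1/16) * v ^ 2) * (1 + (1/8) * v * (v - u)) := by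
  obtain ⟨hu1, hu2⟩ := abs_le.1 hu
  obtain ⟨hv1, hv2⟩ := abs_le.1 hv
  have hxabs : |(1/16) * (v ^ 2 - u ^ 2)| ≤ 1 := by
    rw [abs_le]
    constructor <;> nlinarith [sq_nonneg u, sq_nonneg v]
  have h1 := exp_quad_bound hxabs
  have halg : 1 + (1/16) * (v ^ 2 - u ^ 2) + (3/4) * ((1/16) * (v ^ 2 - u ^ 2)) ^ 2 ≤
      1 + (1/8) * v * (v - u) := by
    have hfac : ((1/16) * (v ^ 2 - u ^ 2)) ^ 2 = (1/256) * ((v - u) ^ 2 * (v + u) ^ 2) := by ring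
    have h16 : (v + u) ^ 2 ≤ 16 := by nlinarith
    have h3 : (v - u) ^ 2 * (v + u) ^ 2 ≤ (v - u) ^ 2 * 16 :=
      mul_le_mul_of_nonneg_left h16 (sq_nonneg _)
    have h4 : (1/8) * v * (v - u) - (1/16) * (v ^ 2 - u ^ 2) = (1/16) * (v - u) ^ 2 := by ring
    have h5 : (3/4) * ((1/256) * ((v - u) ^ 2 * (v + u) ^ 2)) ≤ (1/16) * (v - u) ^ 2 := by
      linarith [h3, sq_nonneg (v - u)]
    rw [hfac]
    linarith
  have hkey : Real.exp (-(1/16) * u ^ 2) =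
      Real.exp (-(1/16) * v ^ 2) * Real.exp ((1/16) * (v ^ 2 - u ^ 2)) := by
    rw [← Real.exp_add]; congr 1; ring
  rw [hkey]
  exact mul_le_mul_of_nonneg_left (h1.trans halg) (Real.exp_pos _).le

lemma tangent_ineq {Y μ t : ℝ} (hY : |Y| ≤ 1) (hμ : |μ| ≤ 1) (ht : |t| ≤ 1) :
    Real.exp (-(1/16) * (Y - t) ^ 2) ≤
      Real.exp (-(1/16) * (Y - μ) ^ 2) * (1 + (1/8) * (Y - μ) * (t - μ)) := by
  obtain ⟨hY1, hY2⟩ := abs_le.1 hY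
  obtain ⟨ht1, ht2⟩ := abs_le.1 ht
  obtain ⟨hμ1, hμ2⟩ := abs_le.1 hμ
  have hu : |Y - t| ≤ 2 := abs_le.2 ⟨by linarith, by linarith⟩
  have hv : |Y - μ| ≤ 2 := abs_le.2 ⟨by linarith, by linarith⟩
  have := tangent_core hu hv
  have htμ : t - μ = (Y - μ) - (Y - t) := by ring
  rw [htμ]
  exact this

lemma net_set_nonempty {E : Type*} [MetricSpace E] {A : Set E} (hA : IsCompact A)
    {δ : ℝ} (hδ : 0 < δ) :
    {n : ℕ | ∃ S : Finset E, ↑S ⊆ A ∧ S.card = n ∧ ∀ a ∈ A, ∃ b ∈ S, dist a b ≤ δ}.Nonempty := by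
  classical
  obtain ⟨t, htA, htfin, htcover⟩ :=
    totallyBounded_iff_subset.1 hA.totallyBounded _ (Metric.dist_mem_uniformity hδ)
  refine ⟨htfin.toFinset.card, htfin.toFinset, by simpa using htA, rfl, ?_⟩
  intro a ha
  have mem := htcover ha
  simp only [Set.mem_iUnion] at mem
  obtain ⟨b, hb, hab⟩ := mem
  exact ⟨b, by simpa using hb, le_of_lt hab⟩

lemma exists_min_net {E : Type*} [MetricSpace E] {A : Set E} (hA : IsCompact A)
    {δ : ℝ} (hδ : 0 < δ) :
    ∃ S : Finset E, ↑S ⊆ A ∧ S.card = coveringNumber A δ ∧ ∀ a ∈ A, ∃ b ∈ S, dist a b ≤ δ :=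
  Nat.sInf_mem (net_set_nonempty hA hδ)

lemma coveringNumber_anti {E : Type*} [MetricSpace E] {A : Set E} (hA : IsCompact A)
    {δ δ' : ℝ} (h0 : 0 < δ) (hle : δ ≤ δ') : coveringNumber A δ' ≤ coveringNumber A δ := by
  obtain ⟨S, h1, h2, h3⟩ := exists_min_net hA h0
  exact Nat.sInf_le ⟨S, h1, h2, fun a ha => (h3 a ha).imp fun b hb => ⟨hb.1, hb.2.trans hle⟩⟩

lemma one_le_coveringNumber {E : Type*} [MetricSpace E] {A : Set E} (hA : IsCompact A)
    (hne : A.Nonempty) {δ : ℝ} (h0 : 0 < δ) : 1 ≤ coveringNumber A δ := by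
  obtain ⟨S, _, h2, h3⟩ := exists_min_net hA h0
  obtain ⟨a, ha⟩ := hne
  obtain ⟨b, hb, _⟩ := h3 a ha
  rw [← h2]
  exact Nat.one_le_iff_ne_zero.2 (Finset.card_ne_zero_of_mem hb)

section AA

variable {X : Type*} {E : Type*}

noncomputable def lossList (h : E → X → ℝ) (e : E) (l : List (X × ℝ)) : ℝ :=
  (l.map fun q => (q.2 - h e q.1) ^ 2).sum

noncomputable def aaW (w : E → ℝ) (h : E → X → ℝ) (l : List (X × ℝ)) (e : E) : ℝ :=
  w e * Real.exp (-(1/16) * lossList h e l)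

noncomputable def aaStrategy (w : E → ℝ) (h : E → X → ℝ) (l : List (X × ℝ)) (z : X) : ℝ :=
  (∑' e, aaW w h l e * h e z) / ∑' e, aaW w h l e

lemma lossList_nonneg (h : E → X → ℝ) (e : E) (l : List (X × ℝ)) : 0 ≤ lossList h e l := by
  apply List.sum_nonneg
  intro a ha
  obtain ⟨q, _, rfl⟩ := List.mem_map.1 ha
  positivity

variable {w : E → ℝ} {h : E → X → ℝ}

lemma aaW_pos (hw_pos : ∀ e, 0 < w e) (l : List (X × ℝ)) (e : E) : 0 < aaW w h l e :=
  mul_pos (hw_pos e) (Real.exp_pos _)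

lemma aaW_le (hw_pos : ∀ e, 0 < w e) (l : List (X × ℝ)) (e : E) : aaW w h l e ≤ w e := by
  have h1 : Real.exp (-(1/16) * lossList h e l) ≤ 1 := by
    rw [Real.exp_le_one_iff]
    have := lossList_nonneg h e l
    nlinarith
  calc aaW w h l e ≤ w e * 1 := mul_le_mul_of_nonneg_left h1 (hw_pos e).le
    _ = w e := mul_one _

lemma summable_aaW (hw_pos : ∀ e, 0 < w e) (hw_sum : Summable w) (l : List (X × ℝ)) :
    Summable (aaW w h l) :=
  hw_sum.of_nonneg_of_le (fun e => (aaW_pos hw_pos l e).le) (aaW_le hw_pos l)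

lemma summable_aaW_mul (hw_pos : ∀ e, 0 < w e) (hw_sum : Summable w)
    (hh : ∀ e z, |h e z| ≤ 1) (l : List (X × ℝ)) (z : X) :
    Summable (fun e => aaW w h l e * h e z) := by
  have habs : Summable (fun e => |aaW w h l e * h e z|) := by
    refine hw_sum.of_nonneg_of_le (fun e => abs_nonneg _) fun e => ?_
    rw [abs_mul, abs_of_pos (aaW_pos hw_pos l e)]
    calc aaW w h l e * |h e z| ≤ aaW w h l e * 1 :=
          mul_le_mul_of_nonneg_left (hh e z) (aaW_pos hw_pos l e).le
      _ ≤ w e := by rw [mul_one]; exact aaW_le hw_pos l e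
  exact summable_abs_iff.1 habs

lemma V_pos [Nonempty E] (hw_pos : ∀ e, 0 < w e) (hw_sum : Summable w) (l : List (X × ℝ)) :
    0 < ∑' e, aaW w h l e :=
  Summable.tsum_pos (summable_aaW hw_pos hw_sum l) (fun e => (aaW_pos hw_pos l e).le)
    (Classical.arbitrary E) (aaW_pos hw_pos l _)

lemma abs_aaStrategy_le_one [Nonempty E] (hw_pos : ∀ e, 0 < w e) (hw_sum : Summable w)
    (hh : ∀ e z, |h e z| ≤ 1) (l : List (X × ℝ)) (z : X) :
    |aaStrategy w h l z| ≤ 1 := by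
  have hV := V_pos (h := h) hw_pos hw_sum l
  have habs : Summable (fun e => |aaW w h l e * h e z|) :=
    (summable_aaW_mul hw_pos hw_sum hh l z).abs
  have hnum : |∑' e, aaW w h l e * h e z| ≤ ∑' e, aaW w h l e := by
    calc |∑' e, aaW w h l e * h e z| = ‖∑' e, aaW w h l e * h e z‖ := (Real.norm_eq_abs _).symm
      _ ≤ ∑' e, ‖aaW w h l e * h e z‖ :=
          norm_tsum_le_tsum_norm (by simpa only [Real.norm_eq_abs] using habs)
      _ = ∑' e, |aaW w h l e * h e z| := by simp only [Real.norm_eq_abs]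
      _ ≤ ∑' e, aaW w h l e := by
          refine Summable.tsum_le_tsum (fun e => ?_) habs (summable_aaW hw_pos hw_sum l)
          rw [abs_mul, abs_of_pos (aaW_pos hw_pos l e)]
          calc aaW w h l e * |h e z| ≤ aaW w h l e * 1 :=
                mul_le_mul_of_nonneg_left (hh e z) (aaW_pos hw_pos l e).le
            _ = aaW w h l e := mul_one _
  rw [aaStrategy, abs_div, abs_of_pos hV]
  exact div_le_one_of_le₀ hnum hV.le

theorem aa_bound [Nonempty E] (w : E → ℝ) (h : E → X → ℝ)
    (hw_pos : ∀ e, 0 < w e) (hw_sum : Summable w) (hw_le : ∑' e, w e ≤ 1)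
    (hh : ∀ e z, |h e z| ≤ 1)
    (x : ℕ → X) (y : ℕ → ℝ) (hy : ∀ n, |y n| ≤ 1) :
    (∀ n, |preds (aaStrategy w h) x y n| ≤ 1) ∧
    ∀ N : ℕ, ∀ e : E, ∑ n ∈ Finset.range N, (y n - preds (aaStrategy w h) x y n) ^ 2 ≤
      (∑ n ∈ Finset.range N, (y n - h e (x n)) ^ 2) + 16 * Real.log (1 / w e) := by
  set hist : ℕ → List (X × ℝ) := fun n => (List.range n).map fun i => (x i, y i) with hhist
  have hpred : ∀ n, preds (aaStrategy w h) x y n = aaStrategy w h (hist n) (x n) := fun n => rfl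
  constructor
  · intro n
    rw [hpred]
    exact abs_aaStrategy_le_one hw_pos hw_sum hh _ _
  have hloss_step : ∀ e n, lossList h e (hist (n + 1)) =
      lossList h e (hist n) + (y n - h e (x n)) ^ 2 := by
    intro e n
    simp only [hhist, lossList, List.range_succ, List.map_append, List.sum_append,
      List.map_cons, List.map_nil, List.sum_cons, List.sum_nil]
    ring
  have hloss_hist : ∀ e N, lossList h e (hist N) = ∑ n ∈ Finset.range N, (y n - h e (x n)) ^ 2 := by
    intro e N
    induction N with
    | zero => simp [hhist, lossList]
    | succ n ih => rw [hloss_step, ih, Finset.sum_range_succ]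
  have hVstep : ∀ n, (∑' e, aaW w h (hist (n + 1)) e) ≤
      Real.exp (-(1/16) * (y n - preds (aaStrategy w h) x y n) ^ 2) *
        (∑' e, aaW w h (hist n) e) := by
    intro n
    have hvsum : Summable (aaW w h (hist n)) := summable_aaW hw_pos hw_sum _
    have hvhsum : Summable (fun e => aaW w h (hist n) e * h e (x n)) :=
      summable_aaW_mul hw_pos hw_sum hh _ _
    have hV : 0 < ∑' e, aaW w h (hist n) e := V_pos hw_pos hw_sum _
    have hμabs : |preds (aaStrategy w h) x y n| ≤ 1 := by
      rw [hpred]; exact abs_aaStrategy_le_one hw_pos hw_sum hh _ _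
    set μ : ℝ := preds (aaStrategy w h) x y n with hμdef
    set a : ℝ := Real.exp (-(1/16) * (y n - μ) ^ 2) with ha
    set b : ℝ := (1/8) * (y n - μ) with hb
    have hμeq : μ * (∑' e, aaW w h (hist n) e) = ∑' e, aaW w h (hist n) e * h e (x n) := by
      have hμ2 : μ = (∑' e, aaW w h (hist n) e * h e (x n)) / (∑' e, aaW w h (hist n) e) := rfl
      rw [hμ2, div_mul_cancel₀ _ (ne_of_gt hV)]
    have hptw : ∀ e, aaW w h (hist (n + 1)) e ≤
        aaW w h (hist n) e * (a + (a * b) * (h e (x n) - μ)) := by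
      intro e
      have hexp : aaW w h (hist (n + 1)) e =
          aaW w h (hist n) e * Real.exp (-(1/16) * (y n - h e (x n)) ^ 2) := by
        rw [aaW, aaW, hloss_step, mul_assoc, ← Real.exp_add]
        congr 2
        ring
      rw [hexp]
      have ht := tangent_ineq (hy n) hμabs (hh e (x n))
      calc aaW w h (hist n) e * Real.exp (-(1/16) * (y n - h e (x n)) ^ 2)
          ≤ aaW w h (hist n) e * (a * (1 + b * (h e (x n) - μ))) := by
            refine mul_le_mul_of_nonneg_left ?_ (aaW_pos hw_pos _ e).le
            calc Real.exp (-(1/16) * (y n - h e (x n)) ^ 2)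
                ≤ Real.exp (-(1/16) * (y n - μ) ^ 2) *
                    (1 + (1/8) * (y n - μ) * (h e (x n) - μ)) := ht
              _ = a * (1 + b * (h e (x n) - μ)) := by rw [ha, hb]
        _ = aaW w h (hist n) e * (a + (a * b) * (h e (x n) - μ)) := by ring
    have hrw : (fun e => aaW w h (hist n) e * (a + (a * b) * (h e (x n) - μ))) =
        (fun e => aaW w h (hist n) e * (a - a * b * μ) +
          (aaW w h (hist n) e * h e (x n)) * (a * b)) := by
      funext e; ring
    have hRsum : Summable (fun e => aaW w h (hist n) e * (a + (a * b) * (h e (x n) - μ))) := by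
      rw [hrw]
      exact (hvsum.mul_right _).add (hvhsum.mul_right _)
    have hLsum : Summable (aaW w h (hist (n + 1))) := summable_aaW hw_pos hw_sum _
    calc ∑' e, aaW w h (hist (n + 1)) e
        ≤ ∑' e, aaW w h (hist n) e * (a + (a * b) * (h e (x n) - μ)) :=
          Summable.tsum_le_tsum hptw hLsum hRsum
      _ = (∑' e, aaW w h (hist n) e) * (a - a * b * μ) +
          (∑' e, aaW w h (hist n) e * h e (x n)) * (a * b) := by
          rw [hrw, Summable.tsum_add (hvsum.mul_right _) (hvhsum.mul_right _),
            tsum_mul_right, tsum_mul_right]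
      _ = a * (∑' e, aaW w h (hist n) e) := by
          rw [← hμeq]; ring
  have hVN : ∀ N, (∑' e, aaW w h (hist N) e) ≤
      Real.exp (-(1/16) * ∑ n ∈ Finset.range N, (y n - preds (aaStrategy w h) x y n) ^ 2) := by
    intro N
    induction N with
    | zero =>
      have h0 : ∀ e, aaW w h (hist 0) e = w e := by
        intro e
        simp [aaW, lossList, hhist]
      calc (∑' e, aaW w h (hist 0) e) = ∑' e, w e := by simp only [h0]
        _ ≤ 1 := hw_le
        _ = Real.exp (-(1/16) * ∑ n ∈ Finset.range 0, (y n - preds (aaStrategy w h) x y n) ^ 2) := by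
            simp
    | succ n ih =>
      calc (∑' e, aaW w h (hist (n + 1)) e)
          ≤ Real.exp (-(1/16) * (y n - preds (aaStrategy w h) x y n) ^ 2) *
              (∑' e, aaW w h (hist n) e) := hVstep n
        _ ≤ Real.exp (-(1/16) * (y n - preds (aaStrategy w h) x y n) ^ 2) *
              Real.exp (-(1/16) * ∑ m ∈ Finset.range n, (y m - preds (aaStrategy w h) x y m) ^ 2) :=
            mul_le_mul_of_nonneg_left ih (Real.exp_pos _).le
        _ = Real.exp (-(1/16) * ∑ m ∈ Finset.range (n + 1),
              (y m - preds (aaStrategy w h) x y m) ^ 2) := by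
            rw [← Real.exp_add, Finset.sum_range_succ]
            congr 1
            ring
  intro N e
  have h1 : w e * Real.exp (-(1/16) * lossList h e (hist N)) ≤
      Real.exp (-(1/16) * ∑ n ∈ Finset.range N, (y n - preds (aaStrategy w h) x y n) ^ 2) := by
    refine (Summable.le_tsum (summable_aaW hw_pos hw_sum (hist N)) e
      (fun j _ => (aaW_pos hw_pos _ j).le)).trans (hVN N)
  rw [hloss_hist] at h1
  have h2 := Real.log_le_log (mul_pos (hw_pos e) (Real.exp_pos _)) h1
  rw [Real.log_mul (ne_of_gt (hw_pos e)) (Real.exp_ne_zero _), Real.log_exp, Real.log_exp] at h2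
  have h3 : Real.log (1 / w e) = - Real.log (w e) := by rw [one_div, Real.log_inv]
  linarith

end AA


set_option maxHeartbeats 1000000 in
/-- Theorem 3: regret bound for a Banach space `𝓕` compactly embedded in `C(X)`. -/
theorem stmt3 : ∃ C : ℝ, 0 < C ∧
    ∀ (X : Type u) [MetricSpace X] [CompactSpace X]
      (𝓕 : Type v) [NormedAddCommGroup 𝓕] [NormedSpace ℝ 𝓕] [CompleteSpace 𝓕]
      (ι : 𝓕 →ₗ[ℝ] C(X, ℝ)),
      Function.Injective ι →
      IsCompact (⇑ι '' Metric.closedBall (0 : 𝓕) 1) →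
      ∃ σ : List (X × ℝ) → X → ℝ,
        ∀ x : ℕ → X, ∀ y : ℕ → ℝ, (∀ n, y n ∈ Set.Icc (-1 : ℝ) 1) →
          (∀ n, |preds σ x y n| ≤ 1) ∧
          ∀ N : ℕ, ∀ f : 𝓕,
            ∑ n ∈ Finset.range N, (y n - preds σ x y n) ^ 2 ≤
              ∑ n ∈ Finset.range N, (y n - ι f (x n)) ^ 2 +
                C * sInf ((fun ε : ℝ =>
                  metricEntropy (⇑ι '' Metric.closedBall (0 : 𝓕) 1)
                      (ε / (2 * max 1 ‖f‖)) +
                    Real.logb 2 (Real.logb 2 (1 / ε)) +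
                    Real.logb 2 (Real.logb 2 (2 * max 1 ‖f‖)) +
                    ε * N + 1) '' Set.Ioc 0 (1 / 2)) := by
  refine ⟨200, by norm_num, ?_⟩
  intro X _ _ 𝓕 _ _ _ ι hinj hcomp
  classical
  have hA : IsCompact (⇑ι '' Metric.closedBall (0 : 𝓕) 1) := hcomp
  set A : Set C(X, ℝ) := ⇑ι '' Metric.closedBall (0 : 𝓕) 1 with hA_def
  have hAne : A.Nonempty := ⟨ι 0, 0, Metric.mem_closedBall_self zero_le_one, rfl⟩
  have hrad : ∀ i j : ℕ, (0:ℝ) < 1 / 2 ^ (i + 1 + j) := fun i j => by positivity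
  have hnets : ∀ i j : ℕ, ∃ S : Finset C(X, ℝ), ↑S ⊆ A ∧
      S.card = coveringNumber A (1 / 2 ^ (i + 1 + j)) ∧
      ∀ a ∈ A, ∃ b ∈ S, dist a b ≤ 1 / 2 ^ (i + 1 + j) :=
    fun i j => exists_min_net hA (hrad i j)
  choose S hS_sub hS_card hS_net using hnets
  set pt : ℕ × ℕ × ℕ → C(X, ℝ) := fun e => (S e.1 e.2.1).toList.getD e.2.2 0 with hpt_def
  set h : ℕ × ℕ × ℕ → X → ℝ := fun e z => clp ((2:ℝ) ^ e.2.1 * (pt e) z) with hh_def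
  set w : ℕ × ℕ × ℕ → ℝ := fun e => pw e.1 * (pw e.2.1 * pw e.2.2) with hw_def
  have hw_pos : ∀ e, 0 < w e := by
    intro e
    simp only [hw_def]
    exact mul_pos (pw_pos _) (mul_pos (pw_pos _) (pw_pos _))
  have hw_sum : Summable w := by
    have h1 : Summable (fun q : ℕ × ℕ => pw q.1 * pw q.2) :=
      summable_pw.mul_of_nonneg summable_pw (Pi.le_def.2 fun n => (pw_pos n).le)
        (Pi.le_def.2 fun n => (pw_pos n).le)
    have h2 : Summable (fun e : ℕ × (ℕ × ℕ) =>
        pw e.1 * ((fun q : ℕ × ℕ => pw q.1 * pw q.2) e.2)) :=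
      summable_pw.mul_of_nonneg h1 (Pi.le_def.2 fun n => (pw_pos n).le)
        (Pi.le_def.2 fun q => (mul_pos (pw_pos _) (pw_pos _)).le)
    simpa only [hw_def] using h2
  have hw_le : (∑' e, w e) ≤ 1 := by
    refine tsum_le_of_sum_le' zero_le_one fun s => ?_
    set n := (s.sup fun e : ℕ × ℕ × ℕ => max e.1 (max e.2.1 e.2.2)) + 1 with hn
    have hsub : s ⊆ Finset.range n ×ˢ (Finset.range n ×ˢ Finset.range n) := by
      intro e he
      have hle := Finset.le_sup (f := fun e : ℕ × ℕ × ℕ => max e.1 (max e.2.1 e.2.2)) he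
      have h1 : e.1 ≤ n - 1 := le_trans (le_max_left _ _) hle
      have h2 : e.2.1 ≤ n - 1 := le_trans (le_trans (le_max_left _ _) (le_max_right _ _)) hle
      have h3 : e.2.2 ≤ n - 1 := le_trans (le_trans (le_max_right _ _) (le_max_right _ _)) hle
      simp only [Finset.mem_product, Finset.mem_range]
      omega
    have hQ : ∑ q ∈ Finset.range n ×ˢ Finset.range n, pw q.1 * pw q.2
        = (∑ i ∈ Finset.range n, pw i) * (∑ i ∈ Finset.range n, pw i) := by
      rw [Finset.sum_mul_sum, Finset.sum_product]
    have hsumnn : (0:ℝ) ≤ ∑ i ∈ Finset.range n, pw i :=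
      Finset.sum_nonneg fun i _ => (pw_pos i).le
    have hsum1 : (∑ i ∈ Finset.range n, pw i) ≤ 1 := sum_pw_le _
    calc ∑ e ∈ s, w e
        ≤ ∑ e ∈ Finset.range n ×ˢ (Finset.range n ×ˢ Finset.range n), w e :=
          Finset.sum_le_sum_of_subset_of_nonneg hsub fun i _ _ => (hw_pos i).le
      _ = (∑ i ∈ Finset.range n, pw i) *
            ((∑ i ∈ Finset.range n, pw i) * (∑ i ∈ Finset.range n, pw i)) := by
          simp only [hw_def]
          rw [Finset.sum_product]
          calc ∑ i ∈ Finset.range n, ∑ q ∈ Finset.range n ×ˢ Finset.range n,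
                pw i * (pw q.1 * pw q.2)
              = ∑ i ∈ Finset.range n, pw i *
                  ∑ q ∈ Finset.range n ×ˢ Finset.range n, pw q.1 * pw q.2 := by
                refine Finset.sum_congr rfl fun i _ => (Finset.mul_sum _ _ _).symm
            _ = _ := by rw [hQ, ← Finset.sum_mul]
      _ ≤ 1 := by nlinarith
  have hh_icc : ∀ e z, |h e z| ≤ 1 := by
    intro e z
    simp only [hh_def]
    exact abs_clp_le_one _
  refine ⟨aaStrategy w h, ?_⟩
  intro x y hy
  have hy' : ∀ n, |y n| ≤ 1 := fun n => abs_le.2 ⟨(hy n).1, (hy n).2⟩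
  obtain ⟨habs, hreg⟩ := aa_bound w h hw_pos hw_sum hw_le hh_icc x y hy'
  refine ⟨habs, ?_⟩
  intro N f
  have hmax1 : (1:ℝ) ≤ max 1 ‖f‖ := le_max_left _ _
  have hmaxpos : (0:ℝ) < max 1 ‖f‖ := lt_of_lt_of_le one_pos hmax1
  have hφpos : (0:ℝ) < 2 * max 1 ‖f‖ := by linarith
  have hlogφ : Real.logb 2 (2 * max 1 ‖f‖) = 1 + Real.logb 2 (max 1 ‖f‖) := by
    rw [Real.logb_mul two_ne_zero (ne_of_gt hmaxpos), Real.logb_self_eq_one one_lt_two]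
  have hLnn : 0 ≤ Real.logb 2 (max 1 ‖f‖) := Real.logb_nonneg one_lt_two hmax1
  have hll2nn : 0 ≤ Real.logb 2 (Real.logb 2 (2 * max 1 ‖f‖)) := by
    refine Real.logb_nonneg one_lt_two ?_
    rw [hlogφ]; linarith
  have key : ∀ ε ∈ Set.Ioc (0:ℝ) (1/2),
      ∑ n ∈ Finset.range N, (y n - preds (aaStrategy w h) x y n) ^ 2 ≤
        ∑ n ∈ Finset.range N, (y n - ι f (x n)) ^ 2 +
          200 * (metricEntropy A (ε / (2 * max 1 ‖f‖)) +
            Real.logb 2 (Real.logb 2 (1 / ε)) +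
            Real.logb 2 (Real.logb 2 (2 * max 1 ‖f‖)) + ε * N + 1) := by
    intro ε hε
    obtain ⟨hε0, hε2⟩ := hε
    have h1εpos : (0:ℝ) < 1 / ε := by positivity
    have h1ε : (2:ℝ) ≤ 1 / ε := by rw [le_div_iff₀ hε0]; linarith
    have hlogb1 : (1:ℝ) ≤ Real.logb 2 (1 / ε) := by
      have h2 := (Real.logb_le_logb one_lt_two two_pos h1εpos).2 h1ε
      rwa [Real.logb_self_eq_one one_lt_two] at h2
    set k : ℕ := ⌊Real.logb 2 (1 / ε)⌋₊ with hk_def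
    have hk1 : 1 ≤ k := Nat.le_floor (by exact_mod_cast hlogb1)
    have hkR : (1:ℝ) ≤ (k:ℝ) := by exact_mod_cast hk1
    have hkpos : (0:ℝ) < (k:ℝ) := by linarith
    have hkle : (k:ℝ) ≤ Real.logb 2 (1 / ε) := Nat.floor_le (by linarith)
    have hklt : Real.logb 2 (1 / ε) < (k:ℝ) + 1 := Nat.lt_floor_add_one _
    have h2k_le : (2:ℝ) ^ k ≤ 1 / ε := by
      have h2 : (2:ℝ) ^ ((k:ℕ):ℝ) ≤ (2:ℝ) ^ (Real.logb 2 (1 / ε)) :=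
        Real.rpow_le_rpow_of_exponent_le one_le_two hkle
      rwa [Real.rpow_natCast, Real.rpow_logb two_pos (by norm_num) h1εpos] at h2
    have h2k_gt : 1 / ε < (2:ℝ) ^ (k + 1) := by
      have h2 : (2:ℝ) ^ (Real.logb 2 (1 / ε)) < (2:ℝ) ^ (((k + 1 : ℕ)):ℝ) := by
        apply Real.rpow_lt_rpow_of_exponent_lt one_lt_two
        push_cast; linarith
      rwa [Real.rpow_natCast, Real.rpow_logb two_pos (by norm_num) h1εpos] at h2
    have hpk : (0:ℝ) < 2 ^ k := pow_pos two_pos k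
    have hεk_ge : ε * 2 ^ k ≤ 1 := by
      have := (le_div_iff₀ hε0).1 h2k_le
      linarith
    have hεk_lt : (1:ℝ) / 2 ^ k < 2 * ε := by
      rw [div_lt_iff₀ hpk]
      have h3 := (div_lt_iff₀ hε0).1 h2k_gt
      have h4 : (2:ℝ) ^ (k + 1) = 2 * 2 ^ k := by rw [pow_succ]; ring
      nlinarith
    set j : ℕ := ⌈Real.logb 2 (max 1 ‖f‖)⌉₊ with hj_def
    have hjge : max 1 ‖f‖ ≤ (2:ℝ) ^ j := by
      have h1 : Real.logb 2 (max 1 ‖f‖) ≤ ((j:ℕ):ℝ) := Nat.le_ceil _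
      have h2 := Real.rpow_le_rpow_of_exponent_le one_le_two h1
      rwa [Real.rpow_natCast, Real.rpow_logb two_pos (by norm_num) hmaxpos] at h2
    have hjle : (2:ℝ) ^ j ≤ 2 * max 1 ‖f‖ := by
      have h1 : ((j:ℕ):ℝ) ≤ Real.logb 2 (max 1 ‖f‖) + 1 := (Nat.ceil_lt_add_one hLnn).le
      have h2 := Real.rpow_le_rpow_of_exponent_le one_le_two h1
      rw [Real.rpow_natCast] at h2
      rwa [Real.rpow_add two_pos, Real.rpow_logb two_pos (by norm_num) hmaxpos, Real.rpow_one,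
        mul_comm] at h2
    have hpj : (0:ℝ) < 2 ^ j := pow_pos two_pos j
    have hi : k - 1 + 1 = k := Nat.sub_add_cancel hk1
    have hf0mem : ι (((2:ℝ) ^ j)⁻¹ • f) ∈ A := by
      refine ⟨((2:ℝ) ^ j)⁻¹ • f, ?_, rfl⟩
      rw [Metric.mem_closedBall, dist_zero_right, norm_smul, norm_inv, Real.norm_eq_abs,
        abs_of_pos hpj]
      have h5 : ‖f‖ ≤ 2 ^ j := (le_max_right 1 ‖f‖).trans hjge
      calc ((2:ℝ) ^ j)⁻¹ * ‖f‖ ≤ ((2:ℝ) ^ j)⁻¹ * 2 ^ j :=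
            mul_le_mul_of_nonneg_left h5 (inv_nonneg.2 hpj.le)
        _ = 1 := inv_mul_cancel₀ (ne_of_gt hpj)
    obtain ⟨g, hgS, hgdist⟩ := hS_net (k - 1) j _ hf0mem
    have hgmem : g ∈ (S (k - 1) j).toList := Finset.mem_toList.2 hgS
    obtain ⟨idx, hidx⟩ := List.mem_iff_get.1 hgmem
    set m : ℕ := idx.1 with hm_def
    have hmlt : m < (S (k - 1) j).card := by rw [← Finset.length_toList]; exact idx.2
    have hpe : pt (k - 1, j, m) = g := by
      simp only [hpt_def]
      rw [hm_def, List.getD_eq_get (i := idx)]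
      exact hidx
    have happt : ∀ z : X, |(2:ℝ) ^ j * (pt (k - 1, j, m)) z - ι f z| ≤ 1 / 2 ^ k := by
      intro z
      have hdz : dist ((ι (((2:ℝ) ^ j)⁻¹ • f)) z) (g z) ≤ 1 / 2 ^ (k - 1 + 1 + j) :=
        (ContinuousMap.dist_apply_le_dist z).trans hgdist
      rw [hi] at hdz
      have hev : (ι (((2:ℝ) ^ j)⁻¹ • f)) z = ((2:ℝ) ^ j)⁻¹ * (ι f) z := by
        rw [map_smul]
        simp [ContinuousMap.smul_apply]
      rw [hev, Real.dist_eq] at hdz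
      rw [hpe]
      have hrw2 : (2:ℝ) ^ j * g z - ι f z = (2:ℝ) ^ j * (g z - ((2:ℝ) ^ j)⁻¹ * ι f z) := by
        field_simp
      rw [hrw2, abs_mul, abs_of_pos hpj]
      have habs2 : |g z - ((2:ℝ) ^ j)⁻¹ * ι f z| ≤ 1 / 2 ^ (k + j) := by
        rw [abs_sub_comm]; exact hdz
      calc (2:ℝ) ^ j * |g z - ((2:ℝ) ^ j)⁻¹ * ι f z| ≤ (2:ℝ) ^ j * (1 / 2 ^ (k + j)) :=
            mul_le_mul_of_nonneg_left habs2 hpj.le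
        _ = 1 / 2 ^ k := by
            rw [pow_add]
            field_simp
    have hhe : ∀ z, h (k - 1, j, m) z = clp ((2:ℝ) ^ j * pt (k - 1, j, m) z) := by
      intro z; simp only [hh_def]
    have hround : ∀ n, (y n - h (k - 1, j, m) (x n)) ^ 2 ≤
        (y n - (ι f) (x n)) ^ 2 + 4 * (1 / 2 ^ k) := by
      intro n
      have hY := hy' n
      have h1 : |h (k - 1, j, m) (x n) - clp ((ι f) (x n))| ≤ 1 / 2 ^ k := by
        rw [hhe]
        exact (abs_clp_sub_clp_le _ _).trans (happt (x n))
      have h2 : (y n - clp ((ι f) (x n))) ^ 2 ≤ (y n - (ι f) (x n)) ^ 2 := sq_sub_clp_le hY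
      have hu1 : |h (k - 1, j, m) (x n)| ≤ 1 := by rw [hhe]; exact abs_clp_le_one _
      have hv1 : |clp ((ι f) (x n))| ≤ 1 := abs_clp_le_one _
      have hfac : (y n - h (k - 1, j, m) (x n)) ^ 2 - (y n - clp ((ι f) (x n))) ^ 2 =
          (clp ((ι f) (x n)) - h (k - 1, j, m) (x n)) *
            (2 * (y n) - h (k - 1, j, m) (x n) - clp ((ι f) (x n))) := by ring
      have hb1 : |clp ((ι f) (x n)) - h (k - 1, j, m) (x n)| ≤ 1 / 2 ^ k := by
        rw [abs_sub_comm]; exact h1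
      have hb2 : |2 * (y n) - h (k - 1, j, m) (x n) - clp ((ι f) (x n))| ≤ 4 := by
        obtain ⟨a1, a2⟩ := abs_le.1 hY
        obtain ⟨b1, b2⟩ := abs_le.1 hu1
        obtain ⟨c1, c2⟩ := abs_le.1 hv1
        rw [abs_le]; constructor <;> linarith
      have hprod : (clp ((ι f) (x n)) - h (k - 1, j, m) (x n)) *
          (2 * (y n) - h (k - 1, j, m) (x n) - clp ((ι f) (x n))) ≤ (1 / 2 ^ k) * 4 := by
        calc _ ≤ |(clp ((ι f) (x n)) - h (k - 1, j, m) (x n)) *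
              (2 * (y n) - h (k - 1, j, m) (x n) - clp ((ι f) (x n)))| := le_abs_self _
          _ = |clp ((ι f) (x n)) - h (k - 1, j, m) (x n)| *
              |2 * (y n) - h (k - 1, j, m) (x n) - clp ((ι f) (x n))| := abs_mul _ _
          _ ≤ (1 / 2 ^ k) * 4 := mul_le_mul hb1 hb2 (abs_nonneg _) (by positivity)
      linarith
    have hsum_e : ∑ n ∈ Finset.range N, (y n - h (k - 1, j, m) (x n)) ^ 2 ≤
        (∑ n ∈ Finset.range N, (y n - (ι f) (x n)) ^ 2) + (N:ℝ) * (4 * (1 / 2 ^ k)) := by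
      calc ∑ n ∈ Finset.range N, (y n - h (k - 1, j, m) (x n)) ^ 2
          ≤ ∑ n ∈ Finset.range N, ((y n - (ι f) (x n)) ^ 2 + 4 * (1 / 2 ^ k)) :=
            Finset.sum_le_sum fun n _ => hround n
        _ = _ := by
            rw [Finset.sum_add_distrib, Finset.sum_const, Finset.card_range, nsmul_eq_mul]
    have hradpos : (0:ℝ) < ε / (2 * max 1 ‖f‖) := by positivity
    have hle_rad : ε / (2 * max 1 ‖f‖) ≤ 1 / 2 ^ (k - 1 + 1 + j) := by
      rw [hi, div_le_div_iff₀ hφpos (pow_pos two_pos (k + j))]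
      calc ε * 2 ^ (k + j) = (ε * 2 ^ k) * 2 ^ j := by rw [pow_add]; ring
        _ ≤ 1 * 2 ^ j := mul_le_mul_of_nonneg_right hεk_ge hpj.le
        _ = 2 ^ j := one_mul _
        _ ≤ 2 * max 1 ‖f‖ := hjle
        _ ≤ 1 * (2 * max 1 ‖f‖) := by linarith
    set K : ℕ := coveringNumber A (ε / (2 * max 1 ‖f‖)) with hK_def
    have hcard_le : (S (k - 1) j).card ≤ K := by
      rw [hS_card]
      exact coveringNumber_anti hA hradpos hle_rad
    have hK1 : 1 ≤ K := one_le_coveringNumber hA hAne hradpos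
    have hH : metricEntropy A (ε / (2 * max 1 ‖f‖)) = Real.logb 2 ((K:ℕ):ℝ) := rfl
    have hKR : (1:ℝ) ≤ (K:ℝ) := by exact_mod_cast hK1
    have hHnn : 0 ≤ Real.logb 2 ((K:ℕ):ℝ) := Real.logb_nonneg one_lt_two hKR
    have hll1nn : 0 ≤ Real.logb 2 (Real.logb 2 (1 / ε)) :=
      Real.logb_nonneg one_lt_two hlogb1
    have hlogk : Real.log (1 / pw (k - 1)) ≤ 2 + 2 * Real.logb 2 (Real.logb 2 (1 / ε)) := by
      have h1 := log_one_div_pw_le (k - 1)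
      have hkc : (((k - 1 : ℕ)):ℝ) + 2 = (k:ℝ) + 1 := by
        rw [Nat.cast_sub hk1]; push_cast; ring
      rw [hkc] at h1
      have h2 : Real.log ((k:ℝ) + 1) ≤ Real.log 2 + Real.log (k:ℝ) := by
        rw [← Real.log_mul two_ne_zero (by linarith)]
        exact Real.log_le_log (by linarith) (by nlinarith)
      have h3 : Real.log (k:ℝ) ≤ Real.logb 2 (k:ℝ) := log_le_logb_two hkR
      have h4 : Real.logb 2 (k:ℝ) ≤ Real.logb 2 (Real.logb 2 (1 / ε)) :=
        (Real.logb_le_logb one_lt_two hkpos (by linarith)).2 hkle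
      have h5 : Real.log 2 ≤ 1 := by linarith [Real.log_two_lt_d9]
      linarith
    have hlogj : Real.log (1 / pw j) ≤
        4 + 2 * Real.logb 2 (Real.logb 2 (2 * max 1 ‖f‖)) := by
      have h1 := log_one_div_pw_le j
      have hjlt : (j:ℝ) ≤ Real.logb 2 (max 1 ‖f‖) + 1 := (Nat.ceil_lt_add_one hLnn).le
      have h2 : Real.log ((j:ℝ) + 2) ≤ Real.log (3 * (Real.logb 2 (max 1 ‖f‖) + 1)) :=
        Real.log_le_log (by positivity) (by linarith)
      have h3 : Real.log (3 * (Real.logb 2 (max 1 ‖f‖) + 1)) =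
          Real.log 3 + Real.log (Real.logb 2 (max 1 ‖f‖) + 1) :=
        Real.log_mul (by norm_num) (by linarith)
      have h4 : Real.log 3 ≤ 2 := by
        linarith [Real.log_le_sub_one_of_pos (by norm_num : (0:ℝ) < 3)]
      have h5 : Real.log (Real.logb 2 (max 1 ‖f‖) + 1) ≤
          Real.logb 2 (Real.logb 2 (max 1 ‖f‖) + 1) := log_le_logb_two (by linarith)
      have h6 : Real.logb 2 (Real.logb 2 (max 1 ‖f‖) + 1) =
          Real.logb 2 (Real.logb 2 (2 * max 1 ‖f‖)) := by
        rw [hlogφ, add_comm]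
      linarith
    have hlogm : Real.log (1 / pw m) ≤ 2 + 2 * Real.logb 2 ((K:ℕ):ℝ) := by
      have h1 := log_one_div_pw_le m
      have hm2 : (m:ℝ) + 2 ≤ 2 * (K:ℝ) := by
        have hmn : m + 2 ≤ 2 * K := by omega
        exact_mod_cast hmn
      have h2 : Real.log ((m:ℝ) + 2) ≤ Real.log (2 * (K:ℝ)) :=
        Real.log_le_log (by positivity) hm2
      have h3 : Real.log (2 * (K:ℝ)) = Real.log 2 + Real.log (K:ℝ) :=
        Real.log_mul two_ne_zero (by linarith)
      have h4 : Real.log (K:ℝ) ≤ Real.logb 2 (K:ℝ) := log_le_logb_two hKR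
      have h5 : Real.log 2 ≤ 1 := by linarith [Real.log_two_lt_d9]
      linarith
    have hwe : w (k - 1, j, m) = pw (k - 1) * (pw j * pw m) := by simp only [hw_def]
    have hwlog : Real.log (1 / w (k - 1, j, m)) ≤
        8 + 2 * (Real.logb 2 (Real.logb 2 (1 / ε)) +
          Real.logb 2 (Real.logb 2 (2 * max 1 ‖f‖)) + Real.logb 2 ((K:ℕ):ℝ)) := by
      have ha1 : (pw (k - 1))⁻¹ ≠ 0 := inv_ne_zero (pw_pos _).ne'
      have ha2 : (pw j)⁻¹ ≠ 0 := inv_ne_zero (pw_pos _).ne'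
      have ha3 : (pw m)⁻¹ ≠ 0 := inv_ne_zero (pw_pos _).ne'
      rw [hwe, one_div, mul_inv, mul_inv, Real.log_mul ha1 (mul_ne_zero ha2 ha3),
        Real.log_mul ha2 ha3]
      simp only [← one_div]
      linarith [hlogk, hlogj, hlogm]
    have hmain := hreg N (k - 1, j, m)
    have hN4 : (N:ℝ) * (4 * (1 / 2 ^ k)) ≤ 8 * (ε * N) := by
      have hN0 : (0:ℝ) ≤ N := Nat.cast_nonneg N
      nlinarith
    have hεNnn : 0 ≤ ε * (N:ℝ) := by positivity
    rw [hH]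
    linarith
  have h200 : (0:ℝ) < 200 := by norm_num
  rw [← sub_le_iff_le_add', ← div_le_iff₀' h200]
  refine le_csInf ⟨_, ⟨1/2, Set.mem_Ioc.2 ⟨by norm_num, le_rfl⟩, rfl⟩⟩ ?_
  rintro b ⟨ε, hεmem, rfl⟩
  dsimp only
  rw [div_le_iff₀ h200]
  have hkey := key ε hεmem
  linarith
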